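/- Let W : ℝ² → ℝ be a polynomial function with W(x,y) > 0 for all (x, y) ∈ ℝ². Then the Jacobian matrix of the R4-class vector field (P_W, Q_W) at the point A = (1/2, √35/2) has trace τ = 144 + √35·W(1/2, √35/2) and determinant Δ = 144·√35·W(1/2, √35/2), so that τ > 0 and τ² − 4Δ = (144 − √35·W(1/2, √35/2))² ≥ 0; hence A is an unstable node. -/

import Mathlib

/-!
The point `A = (1/2, √35/2)` lies on both circles `x² + y² = 9` and `x² + y² - 2x - 8 = 0`.
Each of the two terms of `P_W` and `Q_W` has one of these circles as a factor, so by the product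
rule at a zero of a factor the Jacobian at `A` involves `W(A)` but no derivative of `W`:
`P_x = 4 + (√35/2) W(A)`, `Q_x = 4√35 - W(A)/2`, `P_y = 4√35 - (35/2) W(A)`,
`Q_y = 140 + (√35/2) W(A)`. Trace and determinant follow by algebra with `√35² = 35`.
-/

open MvPolynomial

theorem MvPolynomial.differentiable_eval_comp {𝕜 σ : Type*} [NontriviallyNormedField 𝕜]
    (p : MvPolynomial σ 𝕜) {f : 𝕜 → σ → 𝕜} (hf : ∀ i, Differentiable 𝕜 (f · i)) :
    Differentiable 𝕜 fun t ↦ eval (f t) p := by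
  induction p using MvPolynomial.induction_on with
  | C a => simp
  | add p q hp hq => simp only [map_add]; exact hp.add hq
  | mul_X p i hp => simp only [map_mul, eval_X]; exact hp.mul (hf i)

section
variable {𝕜 : Type*} [NontriviallyNormedField 𝕜] {c u : 𝕜 → 𝕜} {u' t : 𝕜}

theorem HasDerivAt.mul_of_right_eq_zero (hc : DifferentiableAt 𝕜 c t) (hu : HasDerivAt u u' t)
    (hut : u t = 0) : HasDerivAt (fun s ↦ c s * u s) (c t * u') t :=
  (hc.hasDerivAt.mul hu).congr_deriv (by simp [hut])

theorem HasDerivAt.mul_of_left_eq_zero (hu : HasDerivAt u u' t) (hut : u t = 0)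
    (hc : DifferentiableAt 𝕜 c t) : HasDerivAt (fun s ↦ u s * c s) (u' * c t) t :=
  (hu.mul hc.hasDerivAt).congr_deriv (by simp [hut])
end

noncomputable def r4P (W : MvPolynomial (Fin 2) ℝ) (x y : ℝ) : ℝ :=
  x * (x^2 + y^2 - 1) * (x^2 + y^2 - 9) - y * (x^2 + y^2 - 2*x - 8) * eval ![x, y] W

noncomputable def r4Q (W : MvPolynomial (Fin 2) ℝ) (x y : ℝ) : ℝ :=
  y * (x^2 + y^2 - 1) * (x^2 + y^2 - 9) + x * (x^2 + y^2 - 2*x - 8) * eval ![x, y] W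

variable (W : MvPolynomial (Fin 2) ℝ)

theorem differentiable_eval_pair_fst (b : ℝ) : Differentiable ℝ fun x : ℝ ↦ eval ![x, b] W :=
  W.differentiable_eval_comp fun i ↦ by fin_cases i <;> simp

theorem differentiable_eval_pair_snd (a : ℝ) : Differentiable ℝ fun y : ℝ ↦ eval ![a, y] W :=
  W.differentiable_eval_comp fun i ↦ by fin_cases i <;> simp

section
variable {b : ℝ} (hb : b^2 = 35/4)
include hb

theorem hasDerivAt_r4P_fst :
    HasDerivAt (fun x ↦ r4P W x b) (4 + b * eval ![1/2, b] W) (1/2) := by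
  have h9 : HasDerivAt (fun x : ℝ ↦ x^2 + b^2 - 9) 1 (1/2) :=
    (((hasDerivAt_pow 2 _).add_const _).sub_const _).congr_deriv (by norm_num)
  have hG : HasDerivAt (fun x : ℝ ↦ x^2 + b^2 - 2*x - 8) (-1) (1/2) :=
    ((((hasDerivAt_pow 2 _).add_const _).sub ((hasDerivAt_id _).const_mul 2)).sub_const
      8).congr_deriv (by norm_num)
  have hfirst := h9.mul_of_right_eq_zero (c := fun x ↦ x * (x^2 + b^2 - 1)) (by fun_prop)
    (by linear_combination hb)
  have hsecond := (hG.const_mul b).mul_of_left_eq_zero (by linear_combination b * hb)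
    (differentiable_eval_pair_fst W b (1/2))
  exact (hfirst.sub hsecond).congr_deriv (by linear_combination (1/2) * hb)

theorem hasDerivAt_r4Q_fst :
    HasDerivAt (fun x ↦ r4Q W x b) (8 * b - eval ![1/2, b] W / 2) (1/2) := by
  have h9 : HasDerivAt (fun x : ℝ ↦ x^2 + b^2 - 9) 1 (1/2) :=
    (((hasDerivAt_pow 2 _).add_const _).sub_const _).congr_deriv (by norm_num)
  have hG : HasDerivAt (fun x : ℝ ↦ x^2 + b^2 - 2*x - 8) (-1) (1/2) :=
    ((((hasDerivAt_pow 2 _).add_const _).sub ((hasDerivAt_id _).const_mul 2)).sub_const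
      8).congr_deriv (by norm_num)
  have hG0 : (1/2 : ℝ)^2 + b^2 - 2*(1/2) - 8 = 0 := by linear_combination hb
  have hfirst := h9.mul_of_right_eq_zero (c := fun x ↦ b * (x^2 + b^2 - 1)) (by fun_prop)
    (by linear_combination hb)
  have hxG := hG.mul_of_right_eq_zero (c := fun x ↦ x) differentiableAt_id hG0
  have hsecond := hxG.mul_of_left_eq_zero (mul_eq_zero_of_right _ hG0)
    (differentiable_eval_pair_fst W b (1/2))
  exact (hfirst.add hsecond).congr_deriv (by linear_combination b * hb)

theorem hasDerivAt_r4P_snd :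
    HasDerivAt (fun y ↦ r4P W (1/2) y) (8 * b - 35/2 * eval ![1/2, b] W) b := by
  have h9 : HasDerivAt (fun y : ℝ ↦ (1/2)^2 + y^2 - 9) (2 * b) b :=
    (((hasDerivAt_pow 2 _).const_add _).sub_const _).congr_deriv (by norm_num)
  have hG : HasDerivAt (fun y : ℝ ↦ (1/2)^2 + y^2 - 2*(1/2) - 8) (2 * b) b :=
    ((((hasDerivAt_pow 2 _).const_add _).sub_const _).sub_const _).congr_deriv (by norm_num)
  have hG0 : (1/2 : ℝ)^2 + b^2 - 2*(1/2) - 8 = 0 := by linear_combination hb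
  have hfirst := h9.mul_of_right_eq_zero (c := fun y ↦ 1/2 * ((1/2)^2 + y^2 - 1)) (by fun_prop)
    (by linear_combination hb)
  have hyG := hG.mul_of_right_eq_zero (c := fun y ↦ y) differentiableAt_id hG0
  have hsecond := hyG.mul_of_left_eq_zero (mul_eq_zero_of_right _ hG0)
    (differentiable_eval_pair_snd W (1/2) b)
  exact (hfirst.sub hsecond).congr_deriv
    (by linear_combination (b - 2 * eval ![1/2, b] W) * hb)

theorem hasDerivAt_r4Q_snd :
    HasDerivAt (fun y ↦ r4Q W (1/2) y) (140 + b * eval ![1/2, b] W) b := by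
  have h9 : HasDerivAt (fun y : ℝ ↦ (1/2)^2 + y^2 - 9) (2 * b) b :=
    (((hasDerivAt_pow 2 _).const_add _).sub_const _).congr_deriv (by norm_num)
  have hG : HasDerivAt (fun y : ℝ ↦ (1/2)^2 + y^2 - 2*(1/2) - 8) (2 * b) b :=
    ((((hasDerivAt_pow 2 _).const_add _).sub_const _).sub_const _).congr_deriv (by norm_num)
  have hfirst := h9.mul_of_right_eq_zero (c := fun y ↦ y * ((1/2)^2 + y^2 - 1)) (by fun_prop)
    (by linear_combination hb)
  have hsecond := (hG.const_mul (1/2)).mul_of_left_eq_zero (by linear_combination hb / 2)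
    (differentiable_eval_pair_snd W (1/2) b)
  exact (hfirst.add hsecond).congr_deriv (by linear_combination (16 + 2 * b^2) * hb)

end

/-- For any everywhere-positive polynomial `W`, the Jacobian of the R4-class vector field at
`A = (1/2, √35/2)` has trace `τ = 144 + √35·W(A)` and determinant `Δ = 144·√35·W(A)`, with
`τ > 0` and `τ² − 4Δ = (144 − √35·W(A))² ≥ 0`: `A` is an unstable node. -/
theorem stmt10 (W : MvPolynomial (Fin 2) ℝ)
    (hW : ∀ x y : ℝ, 0 < MvPolynomial.eval ![x, y] W)
    (P Q : ℝ → ℝ → ℝ)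
    (hP : ∀ x y : ℝ, P x y = x * (x^2 + y^2 - 1) * (x^2 + y^2 - 9)
      - y * (x^2 + y^2 - 2*x - 8) * MvPolynomial.eval ![x, y] W)
    (hQ : ∀ x y : ℝ, Q x y = y * (x^2 + y^2 - 1) * (x^2 + y^2 - 9)
      + x * (x^2 + y^2 - 2*x - 8) * MvPolynomial.eval ![x, y] W)
    (a₁ a₂ : ℝ) (ha₁ : a₁ = 1/2) (ha₂ : a₂ = Real.sqrt 35 / 2)
    (τ Δ : ℝ)
    (hτ : τ = deriv (fun x : ℝ => P x a₂) a₁ + deriv (fun y : ℝ => Q a₁ y) a₂)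
    (hΔ : Δ = deriv (fun x : ℝ => P x a₂) a₁ * deriv (fun y : ℝ => Q a₁ y) a₂
      - deriv (fun y : ℝ => P a₁ y) a₂ * deriv (fun x : ℝ => Q x a₂) a₁) :
    τ = 144 + Real.sqrt 35 * MvPolynomial.eval ![a₁, a₂] W ∧
    Δ = 144 * Real.sqrt 35 * MvPolynomial.eval ![a₁, a₂] W ∧
    0 < τ ∧
    τ^2 - 4*Δ = (144 - Real.sqrt 35 * MvPolynomial.eval ![a₁, a₂] W)^2 ∧
    0 ≤ τ^2 - 4*Δ := by
  subst ha₁ ha₂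
  obtain rfl : P = r4P W := by ext x y; rw [hP, r4P]
  obtain rfl : Q = r4Q W := by ext x y; rw [hQ, r4Q]
  have hs : Real.sqrt 35 ^ 2 = 35 := Real.sq_sqrt (by norm_num)
  have hb : (Real.sqrt 35 / 2) ^ 2 = 35/4 := by linear_combination hs / 4
  rw [(hasDerivAt_r4P_fst W hb).deriv, (hasDerivAt_r4Q_snd W hb).deriv] at hτ hΔ
  rw [(hasDerivAt_r4Q_fst W hb).deriv, (hasDerivAt_r4P_snd W hb).deriv] at hΔ
  have hw := hW (1/2) (Real.sqrt 35 / 2)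
  set w := eval ![1/2, Real.sqrt 35 / 2] W
  have htrace : τ = 144 + Real.sqrt 35 * w := by rw [hτ]; ring
  have hdet : Δ = 144 * Real.sqrt 35 * w := by rw [hΔ]; linear_combination (w^2/4 - 16) * hs
  have hdisc : τ^2 - 4*Δ = (144 - Real.sqrt 35 * w)^2 := by
    rw [htrace, hdet]; ring
  exact ⟨htrace, hdet, by rw [htrace]; positivity, hdisc, hdisc ▸ sq_nonneg _⟩
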